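/- arXiv:0907.4072 — 2 statements merged into one kernel-verified Lean document; each statement's English description precedes it below -/
import Mathlib

section
/- Let V be a finite-dimensional real vector space that is a Lie module over the Lie algebra sl(2,ℝ) of traceless 2×2 real matrices (with the commutator bracket). Then for every vector v ∈ V, the stabilizer subalgebra {x ∈ sl(2,ℝ) : x • v = 0} does not have dimension 2. -/
set_option maxHeartbeats 1000000

open Matrix

lemma centralizer_lemma (X Y : Matrix (Fin 2) (Fin 2) ℝ) (hX : X.trace = 0) (hY : Y.trace = 0)
    (hXne : X ≠ 0) (hc : X * Y = Y * X) : ∃ c : ℝ, Y = c • X := by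
  set a := X 0 0; set b := X 0 1; set c := X 1 0
  set p := Y 0 0; set q := Y 0 1; set r := Y 1 0
  rw [Matrix.trace_fin_two] at hX hY
  have h1 : b * r = q * c := by
    have := congrFun (congrFun hc 0) 0
    simp [Matrix.mul_apply, Fin.sum_univ_two] at this
    linarith [this]
  have h2 : a * q = b * p := by
    have := congrFun (congrFun hc 0) 1
    simp [Matrix.mul_apply, Fin.sum_univ_two] at this
    have hX11 : X 1 1 = -a := by linarith
    have hY11 : Y 1 1 = -p := by linarith
    rw [hX11, hY11] at this
    linarith
  have h3 : c * p = a * r := by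
    have := congrFun (congrFun hc 1) 0
    simp [Matrix.mul_apply, Fin.sum_univ_two] at this
    have hX11 : X 1 1 = -a := by linarith
    have hY11 : Y 1 1 = -p := by linarith
    rw [hX11, hY11] at this
    linarith
  have hX11 : X 1 1 = -a := by linarith
  have hY11 : Y 1 1 = -p := by linarith
  have hmat : ∀ (d : ℝ), p = d * a → q = d * b → r = d * c → ∃ c0 : ℝ, Y = c0 • X := by
    intro d hp hq hr
    refine ⟨d, ?_⟩
    ext i j
    fin_cases i <;> fin_cases j <;> simp only [Matrix.smul_apply, smul_eq_mul]
    · exact hp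
    · exact hq
    · exact hr
    · show Y 1 1 = d * X 1 1
      rw [hX11, hY11, hp]; ring
  by_cases hb : b ≠ 0
  · exact hmat (q / b) (by field_simp; linarith [h2]) (by field_simp) (by field_simp; linarith [h1])
  · push_neg at hb
    by_cases hcne : c ≠ 0
    · exact hmat (r / c) (by field_simp; linarith [h3]) (by field_simp; nlinarith [h1, hb]) (by field_simp)
    · push_neg at hcne
      have ha : a ≠ 0 := by
        intro ha0
        apply hXne
        ext i j
        fin_cases i <;> fin_cases j <;> simp only [Matrix.zero_apply]
        · exact ha0
        · exact hb
        · exact hcne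
        · show X 1 1 = 0
          rw [hX11, ha0]; ring
      exact hmat (p / a) (by field_simp)
        (by field_simp; nlinarith [h2, hb]) (by field_simp; nlinarith [h3, hcne])

lemma sq_zero (E : Matrix (Fin 2) (Fin 2) ℝ) (h1 : E.trace = 0) (h2 : (E * E).trace = 0) :
    E * E = 0 := by
  rw [Matrix.trace_fin_two] at h1
  rw [Matrix.trace_fin_two] at h2
  simp only [Matrix.mul_apply, Fin.sum_univ_two] at h2
  ext i j
  fin_cases i <;> fin_cases j <;>
    simp only [Fin.mk_zero, Fin.mk_one, Matrix.mul_apply, Fin.sum_univ_two, Matrix.zero_apply]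
  · linear_combination (1/2) * h2 + ((E 0 0 - E 1 1)/2) * h1
  · linear_combination E 0 1 * h1
  · linear_combination E 1 0 * h1
  · linear_combination (1/2) * h2 + ((E 1 1 - E 0 0)/2) * h1

lemma key_identity (E : Matrix (Fin 2) (Fin 2) ℝ) (h1 : E.trace = 0) (h2 : E * E = 0) :
    E * Eᵀ * E = (E * Eᵀ).trace • E := by
  rw [Matrix.trace_fin_two] at h1
  have h00 := congrFun (congrFun h2 0) 0
  simp only [Matrix.mul_apply, Fin.sum_univ_two, Matrix.zero_apply] at h00
  ext i j
  fin_cases i <;> fin_cases j <;>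
    simp only [Fin.mk_zero, Fin.mk_one, Matrix.mul_apply, Matrix.transpose_apply,
      Fin.sum_univ_two, Matrix.smul_apply, Matrix.trace_fin_two, smul_eq_mul]
  · linear_combination E 1 1 * h00 - E 0 0 * E 1 1 * h1
  · linear_combination E 0 0 * E 1 0 * h1 - E 1 0 * h00
  · linear_combination E 0 0 * E 0 1 * h1 - E 0 1 * h00
  · linear_combination E 0 0 * h00 - E 0 0 * E 0 0 * h1

lemma trace_pos (E : Matrix (Fin 2) (Fin 2) ℝ) (hE : E ≠ 0) : 0 < (E * Eᵀ).trace := by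
  rw [Matrix.trace_fin_two]
  simp only [Matrix.mul_apply, Matrix.transpose_apply, Fin.sum_univ_two]
  have key := mul_self_nonneg (E 0 0)
  have k2 := mul_self_nonneg (E 0 1)
  have k3 := mul_self_nonneg (E 1 0)
  have k4 := mul_self_nonneg (E 1 1)
  rcases lt_or_eq_of_le (a := (0:ℝ))
    (b := E 0 0 * E 0 0 + E 0 1 * E 0 1 + (E 1 0 * E 1 0 + E 1 1 * E 1 1))
    (by nlinarith) with h | h
  · exact h
  · exfalso
    apply hE
    ext i j
    fin_cases i <;> fin_cases j <;>
      simp only [Fin.mk_zero, Fin.mk_one, Matrix.zero_apply] <;> nlinarith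

lemma bracket_f_eq_zero {L : Type*} [LieRing L] [LieAlgebra ℝ L]
    {V : Type*} [AddCommGroup V] [Module ℝ V] [FiniteDimensional ℝ V]
    [LieRingModule L V] [LieModule ℝ L V] {h e f : L} (t : IsSl2Triple h e f) (v : V)
    (hh : ⁅h, v⁆ = 0) (he : ⁅e, v⁆ = 0) : ⁅f, v⁆ = 0 := by
  rcases eq_or_ne v 0 with rfl | hv
  · simp
  · have P : t.HasPrimitiveVectorWith v (0 : ℝ) :=
      { ne_zero := hv
        lie_h := by simp [hh]
        lie_e := he }
    have := P.pow_toEnd_f_eq_zero_of_eq_nat (n := 0) (by simp)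
    simpa [LieModule.toEnd_apply_apply] using this

attribute [local instance 100] LieRing.ofAssociativeRing

open LieAlgebra.SpecialLinear in
/-- For a finite-dimensional real Lie module `V` over `sl(2,ℝ)` and any `v ∈ V`, the
stabilizer subalgebra `{x ∈ sl(2,ℝ) : x • v = 0}` does not have dimension 2. -/
theorem stmt1 (V : Type*) [AddCommGroup V] [Module ℝ V] [FiniteDimensional ℝ V]
    [LieRingModule (sl (Fin 2) ℝ) V] [LieModule ℝ (sl (Fin 2) ℝ) V] (v : V) :
    Module.finrank ℝ
      (LinearMap.ker ((LinearMap.applyₗ v).comp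
        (LieModule.toEnd ℝ (sl (Fin 2) ℝ) V).toLinearMap)) ≠ 2 := by
  intro hrank
  set K := LinearMap.ker ((LinearMap.applyₗ v).comp
      (LieModule.toEnd ℝ (sl (Fin 2) ℝ) V).toLinearMap) with hKdef
  have memK : ∀ x : sl (Fin 2) ℝ, x ∈ K ↔ ⁅x, v⁆ = 0 := by
    intro x
    simp [hKdef, LinearMap.mem_ker, LieModule.toEnd_apply_apply]
  have Kbr : ∀ x y : sl (Fin 2) ℝ, x ∈ K → y ∈ K → ⁅x, y⁆ ∈ K := by
    intro x y hx hy
    rw [memK] at hx hy ⊢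
    rw [lie_lie, hx, hy, lie_zero, lie_zero, sub_zero]
  obtain ⟨B⟩ : Nonempty (Module.Basis (Fin 2) ℝ K) := ⟨Module.finBasisOfFinrankEq ℝ K hrank⟩
  set x : sl (Fin 2) ℝ := (B 0).1 with hxdef
  set y : sl (Fin 2) ℝ := (B 1).1 with hydef
  have hxK : x ∈ K := (B 0).2
  have hyK : y ∈ K := (B 1).2
  set z : sl (Fin 2) ℝ := ⁅x, y⁆ with hzdef
  have hzK : z ∈ K := Kbr x y hxK hyK
  by_cases hz0 : z = 0
  · -- abelian case: contradiction with basis independence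
    have hX0 : (x.val : Matrix (Fin 2) (Fin 2) ℝ) ≠ 0 := by
      intro h0
      exact B.ne_zero 0 (Subtype.ext (Subtype.ext h0))
    have hcomm : x.val * y.val = y.val * x.val := by
      have h1 : z.val = x.val * y.val - y.val * x.val := sl_bracket (Fin 2) ℝ x y
      rw [hz0] at h1
      exact (sub_eq_zero.mp h1.symm)
    obtain ⟨c, hc⟩ := centralizer_lemma x.val y.val x.2 y.2 hX0 hcomm
    have hBy : B 1 = c • B 0 := Subtype.ext (Subtype.ext hc)
    have h10 : B.repr (B 1) 1 = 1 := by rw [B.repr_self]; simp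
    rw [hBy, _root_.map_smul, B.repr_self] at h10
    simp [Finsupp.single_apply] at h10
  · -- nonabelian case
    set a : ℝ := B.repr ⟨z, hzK⟩ 0 with hadef
    set b : ℝ := B.repr ⟨z, hzK⟩ 1 with hbdef
    have hzval : z = a • x + b • y := by
      have hsum := B.sum_repr ⟨z, hzK⟩
      rw [Fin.sum_univ_two] at hsum
      exact (congrArg Subtype.val hsum).symm
    have hxz : ⁅x, z⁆ = b • z := by
      conv_lhs => rw [hzval]
      rw [lie_add, lie_smul, lie_smul, lie_self, smul_zero, zero_add, ← hzdef]
    have hyz : ⁅y, z⁆ = (-a) • z := by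
      conv_lhs => rw [hzval]
      rw [lie_add, lie_smul, lie_smul, lie_self, smul_zero, add_zero, ← lie_skew, ← hzdef,
        smul_neg, neg_smul]
    obtain ⟨m, hmK, hmn⟩ : ∃ m : sl (Fin 2) ℝ, m ∈ K ∧ ⁅m, z⁆ = z := by
      by_cases hb : b = 0
      · have ha : a ≠ 0 := by
          intro ha0
          apply hz0
          rw [hzval, ha0, hb, zero_smul, zero_smul, add_zero]
        refine ⟨(-a)⁻¹ • y, Submodule.smul_mem K _ hyK, ?_⟩
        rw [smul_lie, hyz, smul_smul, inv_mul_cancel₀ (neg_ne_zero.mpr ha), one_smul]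
      · refine ⟨b⁻¹ • x, Submodule.smul_mem K _ hxK, ?_⟩
        rw [smul_lie, hxz, smul_smul, inv_mul_cancel₀ hb, one_smul]
    -- matrix level
    set N : Matrix (Fin 2) (Fin 2) ℝ := z.val with hNdef
    set M : Matrix (Fin 2) (Fin 2) ℝ := m.val with hMdef
    have hNtr : N.trace = 0 := z.2
    have hMtr : M.trace = 0 := m.2
    have hMN : M * N - N * M = N := by
      have h1 : (⁅m, z⁆ : sl (Fin 2) ℝ).val = M * N - N * M := sl_bracket (Fin 2) ℝ m z
      rw [hmn] at h1
      exact h1.symm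
    have hNne : N ≠ 0 := fun h0 => hz0 (Subtype.ext h0)
    have htrNN : (N * N).trace = 0 := by
      have hrw : N * N = N * M * N - N * N * M := by
        calc N * N = N * (M * N - N * M) := by rw [hMN]
        _ = N * M * N - N * N * M := by rw [mul_sub, mul_assoc, mul_assoc]
      rw [hrw, Matrix.trace_sub]
      rw [Matrix.trace_mul_cycle N M N, sub_self]
    have hNN : N * N = 0 := sq_zero N hNtr htrNN
    set τ : ℝ := (N * Nᵀ).trace with hτdef
    have hτpos : 0 < τ := trace_pos N hNne
    have hτ : τ ≠ 0 := ne_of_gt hτpos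
    have key : N * Nᵀ * N = τ • N := key_identity N hNtr hNN
    have hNTNT : Nᵀ * Nᵀ = 0 := by rw [← Matrix.transpose_mul, hNN, Matrix.transpose_zero]
    have keyT : Nᵀ * (N * Nᵀ) = τ • Nᵀ := by
      have h1 := congrArg Matrix.transpose key
      rw [Matrix.transpose_mul, Matrix.transpose_mul, Matrix.transpose_smul,
        Matrix.transpose_transpose] at h1
      exact h1
    set G : Matrix (Fin 2) (Fin 2) ℝ := N * Nᵀ - Nᵀ * N with hGdef
    have hGtr : G.trace = 0 := by
      rw [hGdef, Matrix.trace_sub, Matrix.trace_mul_comm, sub_self]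
    have hGN : G * N - N * G = (2 * τ) • N := by
      have e1 : (Nᵀ * N) * N = 0 := by rw [mul_assoc, hNN, mul_zero]
      have e2 : N * (N * Nᵀ) = 0 := by rw [← mul_assoc, hNN, zero_mul]
      have e3 : N * (Nᵀ * N) = τ • N := by rw [← mul_assoc]; exact key
      rw [hGdef, sub_mul, mul_sub, e1, e2, e3, key]
      rw [sub_zero, zero_sub, sub_neg_eq_add, ← add_smul, two_mul]
    have hGNT : G * Nᵀ - Nᵀ * G = (-(2 * τ)) • Nᵀ := by
      have e1 : (N * Nᵀ) * Nᵀ = 0 := by rw [mul_assoc, hNTNT, mul_zero]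
      have e2 : (Nᵀ * N) * Nᵀ = τ • Nᵀ := by rw [mul_assoc]; exact keyT
      have e3 : Nᵀ * (Nᵀ * N) = 0 := by rw [← mul_assoc, hNTNT, zero_mul]
      rw [hGdef, sub_mul, mul_sub, e1, e2, e3, keyT]
      module
    set F : Matrix (Fin 2) (Fin 2) ℝ := τ⁻¹ • Nᵀ with hFdef
    set H : Matrix (Fin 2) (Fin 2) ℝ := τ⁻¹ • G with hHdef
    have hHF : N * F - F * N = H := by
      rw [hFdef, hHdef, hGdef, mul_smul_comm, smul_mul_assoc, ← smul_sub]
    have rel1 : H * N - N * H = (2:ℝ) • N := by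
      rw [hHdef, smul_mul_assoc, mul_smul_comm, ← smul_sub, hGN, smul_smul]
      congr 1
      field_simp
    have rel2 : H * F - F * H = -((2:ℝ) • F) := by
      rw [hFdef, hHdef]
      rw [smul_mul_assoc, smul_mul_assoc, mul_smul_comm, mul_smul_comm, ← smul_sub, ← smul_sub,
        hGNT, smul_smul, smul_smul, ← neg_smul, smul_smul]
      congr 1
      field_simp
    have hFtr : F.trace = 0 := by
      rw [hFdef, Matrix.trace_smul, Matrix.trace_transpose, hNtr, smul_zero]
    have hHtr : H.trace = 0 := by rw [hHdef, Matrix.trace_smul, hGtr, smul_zero]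
    set fE : sl (Fin 2) ℝ := ⟨F, hFtr⟩ with hfEdef
    set hE : sl (Fin 2) ℝ := ⟨H, hHtr⟩ with hhEdef
    have hHne : hE ≠ 0 := by
      intro h0
      have hH0 : H = 0 := congrArg Subtype.val h0
      rw [hH0, zero_mul, mul_zero, sub_zero] at rel1
      exact hNne (by simpa using rel1.symm)
    have t : IsSl2Triple hE z fE := by
      refine ⟨hHne, ?_, ?_, ?_⟩
      · apply Subtype.ext
        rw [sl_bracket]
        exact hHF
      · apply Subtype.ext
        have : ((2 • z : sl (Fin 2) ℝ) : Matrix (Fin 2) (Fin 2) ℝ) = (2:ℕ) • N := rfl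
        rw [sl_bracket, this]
        rw [rel1]
        simp [two_smul]
      · apply Subtype.ext
        have : ((-(2 • fE) : sl (Fin 2) ℝ) : Matrix (Fin 2) (Fin 2) ℝ) = -((2:ℕ) • F) := rfl
        rw [sl_bracket, this, rel2]
        simp [two_smul]
    -- H ∈ K
    set C : Matrix (Fin 2) (Fin 2) ℝ := (2:ℝ) • M - H with hCdef
    have hCtr : C.trace = 0 := by
      rw [hCdef, Matrix.trace_sub, Matrix.trace_smul, hMtr, hHtr]; simp
    have hCcomm : N * C = C * N := by
      have expand : C * N - N * C = (2:ℝ) • (M * N - N * M) - (H * N - N * H) := by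
        rw [hCdef, sub_mul, mul_sub, smul_mul_assoc, mul_smul_comm, smul_sub]
        abel
      rw [hMN, rel1, sub_self] at expand
      exact (sub_eq_zero.mp expand).symm
    obtain ⟨β, hβ⟩ := centralizer_lemma N C hNtr hCtr hNne hCcomm
    have hHK : hE ∈ K := by
      rw [memK]
      have hHval : hE = (2:ℝ) • m - β • z := by
        apply Subtype.ext
        have h1 : (2:ℝ) • M - H = β • N := by rw [← hCdef]; exact hβ
        have h2 : H = (2:ℝ) • M - β • N := by rw [← h1]; abel
        simpa using h2
      rw [hHval, sub_lie, smul_lie, smul_lie, (memK m).1 hmK, (memK z).1 hzK]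
      simp
    have hfK : fE ∈ K := by
      rw [memK]
      exact bracket_f_eq_zero t v ((memK hE).1 hHK) ((memK z).1 hzK)
    -- three independent elements of K
    let u : Fin 3 → K := ![⟨hE, hHK⟩, ⟨z, hzK⟩, ⟨fE, hfK⟩]
    have hu : LinearIndependent ℝ u := by
      rw [Fintype.linearIndependent_iff]
      intro g hg
      have hmat : g 0 • H + g 1 • N + g 2 • F = 0 := by
        have h1 := congrArg (fun w : K => ((w : sl (Fin 2) ℝ) : Matrix (Fin 2) (Fin 2) ℝ)) hg
        simpa [u, Fin.sum_univ_three] using h1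
      have hFN : F * N - N * F = -H := by rw [← hHF]; abel
      have E1 : (g 0 * 2) • N - g 2 • H = 0 := by
        have expand : (g 0 • H + g 1 • N + g 2 • F) * N - N * (g 0 • H + g 1 • N + g 2 • F)
            = g 0 • (H * N - N * H) + g 1 • (N * N - N * N) + g 2 • (F * N - N * F) := by
          simp only [add_mul, mul_add, smul_mul_assoc, mul_smul_comm, smul_sub]
          abel
        have e0 : (0 : Matrix (Fin 2) (Fin 2) ℝ)
            = g 0 • (H * N - N * H) + g 1 • (N * N - N * N) + g 2 • (F * N - N * F) := by
          rw [← expand, hmat]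
          simp
        rw [rel1, hFN, sub_self, smul_zero, add_zero, smul_smul, smul_neg] at e0
        rw [sub_eq_add_neg]
        exact e0.symm
      have E2 : (g 2 * 2) • N = 0 := by
        have expand2 : ((g 0 * 2) • N - g 2 • H) * N - N * ((g 0 * 2) • N - g 2 • H)
            = (g 0 * 2) • (N * N - N * N) - g 2 • (H * N - N * H) := by
          simp only [sub_mul, mul_sub, smul_mul_assoc, mul_smul_comm, smul_sub]
          abel
        have e0' : (0 : Matrix (Fin 2) (Fin 2) ℝ)
            = (g 0 * 2) • (N * N - N * N) - g 2 • (H * N - N * H) := by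
          rw [← expand2, E1]
          simp
        rw [sub_self, smul_zero, zero_sub, rel1, smul_smul] at e0'
        exact neg_eq_zero.mp e0'.symm
      have hg2 : g 2 = 0 := by
        rcases smul_eq_zero.mp E2 with h | h
        · linarith
        · exact absurd h hNne
      have hg0 : g 0 = 0 := by
        rw [hg2, zero_smul, sub_zero] at E1
        rcases smul_eq_zero.mp E1 with h | h
        · linarith
        · exact absurd h hNne
      have hg1 : g 1 = 0 := by
        rw [hg0, hg2, zero_smul, zero_smul, zero_add, add_zero] at hmat
        rcases smul_eq_zero.mp hmat with h | h
        · exact h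
        · exact absurd h hNne
      intro i
      fin_cases i
      · exact hg0
      · exact hg1
      · exact hg2
    have hcard := hu.fintype_card_le_finrank
    rw [hrank] at hcard
    simp at hcard
end

section
/- Let V be a finite-dimensional real vector space that is a Lie module over the Lie algebra sl(2,ℝ) of traceless 2×2 real matrices, and let v ∈ V. If there exists a two-dimensional Lie subalgebra k of sl(2,ℝ) such that x • v = 0 for all x ∈ k, then x • v = 0 for all x ∈ sl(2,ℝ). -/
set_option maxHeartbeats 1600000

open Matrix LieAlgebra.SpecialLinear

private lemma exists_f_aux (h e : Matrix (Fin 2) (Fin 2) ℝ) (hte : e.trace = 0) (hth : h.trace = 0)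
    (hb : e 0 1 ≠ 0) (hrel : h * e - e * h = (2 : ℝ) • e) :
    ∃ f : Matrix (Fin 2) (Fin 2) ℝ, f.trace = 0 ∧ e * f - f * e = h ∧
      h * f - f * h = (-2 : ℝ) • f := by
  set a := e 0 0 with ha
  set b := e 0 1 with hbdef
  set c := e 1 0 with hc
  set p := h 0 0 with hp
  set q := h 0 1 with hq
  set r := h 1 0 with hr
  have he2 : e 1 1 = -a := by
    have := hte; rw [Matrix.trace_fin_two] at this; linarith
  have hh2 : h 1 1 = -p := by
    have := hth; rw [Matrix.trace_fin_two] at this; linarith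
  have E00 := Matrix.ext_iff.mpr hrel 0 0
  have E01 := Matrix.ext_iff.mpr hrel 0 1
  have E10 := Matrix.ext_iff.mpr hrel 1 0
  simp [Matrix.mul_apply, Fin.sum_univ_two, he2, hh2, ← ha, ← hbdef, ← hc, ← hp, ← hq, ← hr]
    at E00 E01 E10
  have habc : a ^ 2 + b * c = 0 := by
    linear_combination (-(a/2)) * E00 + (-(c/4)) * E01 + (-(b/4)) * E10
  have hc' : c = -(a^2)/b := by field_simp; linarith [habc]
  have hp' : p = (a*q + b)/b := by field_simp; linarith [E01]
  have hr' : r = (q*c - 2*a)/b := by field_simp; linarith [E00]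
  set t : ℝ := -q/(2*b) with ht
  have ee : e = !![a, b; c, -a] := by rw [eta_fin_two e, he2]
  have hh : h = !![p, q; r, -p] := by rw [eta_fin_two h, hh2]
  refine ⟨!![t - a*t^2, -b*t^2; (1-a*t)^2/b, -(t - a*t^2)], by simp [Matrix.trace_fin_two], ?_, ?_⟩
  · rw [ee, hh]
    ext i j
    fin_cases i <;> fin_cases j <;>
      simp [Matrix.mul_apply, Fin.sum_univ_two] <;>
      simp only [hp', hr', hc', ht] <;> field_simp <;> ring
  · rw [hh]
    ext i j
    fin_cases i <;> fin_cases j <;>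
      simp [Matrix.mul_apply, Fin.sum_univ_two] <;>
      simp only [hp', hr', hc', ht] <;> field_simp <;> ring

private lemma keyT (X Y : Matrix (Fin 2) (Fin 2) ℝ) :
    (X * Y - Y * X)ᵀ = Yᵀ * Xᵀ - Xᵀ * Yᵀ := by
  rw [Matrix.transpose_sub, Matrix.transpose_mul, Matrix.transpose_mul]

lemma exists_f (h e : Matrix (Fin 2) (Fin 2) ℝ) (hte : e.trace = 0) (hth : h.trace = 0)
    (hne : e ≠ 0) (hrel : h * e - e * h = (2 : ℝ) • e) :
    ∃ f : Matrix (Fin 2) (Fin 2) ℝ, f.trace = 0 ∧ e * f - f * e = h ∧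
      h * f - f * h = (-2 : ℝ) • f := by
  by_cases hb : e 0 1 ≠ 0
  · exact exists_f_aux h e hte hth hb hrel
  by_cases hcc : e 1 0 ≠ 0
  · have T0 := congrArg Matrix.transpose hrel
    rw [keyT, Matrix.transpose_smul] at T0
    have hrelT : (-hᵀ) * eᵀ - eᵀ * (-hᵀ) = (2 : ℝ) • eᵀ := by
      calc (-hᵀ) * eᵀ - eᵀ * (-hᵀ) = eᵀ * hᵀ - hᵀ * eᵀ := by noncomm_ring
        _ = (2 : ℝ) • eᵀ := T0
    obtain ⟨f', htf', h1, h2⟩ := exists_f_aux (-hᵀ) eᵀ (by simpa using hte)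
      (by simpa using hth) (by simpa using hcc) hrelT
    have T1 := congrArg Matrix.transpose h1
    rw [keyT] at T1
    simp only [Matrix.transpose_transpose, Matrix.transpose_neg] at T1
    have T2 := congrArg Matrix.transpose h2
    rw [keyT, Matrix.transpose_smul] at T2
    simp only [Matrix.transpose_transpose, Matrix.transpose_neg] at T2
    refine ⟨f'ᵀ, by simpa using htf', ?_, ?_⟩
    · calc e * f'ᵀ - f'ᵀ * e = -(f'ᵀ * e - e * f'ᵀ) := by abel
        _ = -(-h) := by rw [T1]
        _ = h := neg_neg h
    · calc h * f'ᵀ - f'ᵀ * h = f'ᵀ * (-h) - (-h) * f'ᵀ := by noncomm_ring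
        _ = (-2 : ℝ) • f'ᵀ := T2
  · push_neg at hb
    exfalso
    have he2 : e 1 1 = -(e 0 0) := by
      have := hte; rw [Matrix.trace_fin_two] at this; linarith
    have hcc' : e 1 0 = 0 := by push_neg at hcc; exact hcc
    have E00 := Matrix.ext_iff.mpr hrel 0 0
    simp [Matrix.mul_apply, Fin.sum_univ_two, hb, hcc'] at E00
    have ha0 : e 0 0 = 0 := by linarith
    exact hne (by ext i j; fin_cases i <;> fin_cases j <;> simp [hb, hcc', ha0, he2])

lemma commute_dep (X Y : Matrix (Fin 2) (Fin 2) ℝ) (htX : X.trace = 0) (htY : Y.trace = 0)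
    (hX : X ≠ 0) (hcomm : X * Y = Y * X) : ∃ s : ℝ, Y = s • X := by
  set a := X 0 0 with ha
  set b := X 0 1 with hb
  set c := X 1 0 with hc
  set p := Y 0 0 with hp
  set q := Y 0 1 with hq
  set r := Y 1 0 with hr
  have hX2 : X 1 1 = -a := by have := htX; rw [Matrix.trace_fin_two] at this; linarith
  have hY2 : Y 1 1 = -p := by have := htY; rw [Matrix.trace_fin_two] at this; linarith
  have E00 := Matrix.ext_iff.mpr hcomm 0 0
  have E01 := Matrix.ext_iff.mpr hcomm 0 1
  have E10 := Matrix.ext_iff.mpr hcomm 1 0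
  simp [Matrix.mul_apply, Fin.sum_univ_two, hX2, hY2, ← ha, ← hb, ← hc, ← hp, ← hq, ← hr]
    at E00 E01 E10
  -- E00 : a*p + b*r = p*a + q*c  etc (some form); relations: b*r = c*q, a*q = b*p, c*p = a*r
  have habc : ¬(a = 0 ∧ b = 0 ∧ c = 0) := by
    rintro ⟨h1, h2, h3⟩
    exact hX (by ext i j; fin_cases i <;> fin_cases j <;> simp [← ha, ← hb, ← hc, h1, h2, h3, hX2])
  have key : ∃ s : ℝ, p = s * a ∧ q = s * b ∧ r = s * c := by
    by_cases haa : a ≠ 0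
    · refine ⟨p / a, by field_simp, ?_, ?_⟩ <;> field_simp <;> nlinarith [E00, E01, E10]
    by_cases hbb : b ≠ 0
    · refine ⟨q / b, ?_, by field_simp, ?_⟩ <;> field_simp <;> nlinarith [E00, E01, E10]
    push_neg at haa hbb
    have hcc : c ≠ 0 := fun h => habc ⟨haa, hbb, h⟩
    refine ⟨r / c, ?_, ?_, by field_simp⟩ <;> field_simp <;> nlinarith [E00, E01, E10]
  obtain ⟨s, h1, h2, h3⟩ := key
  exact ⟨s, by ext i j; fin_cases i <;> fin_cases j <;>
    simp [← ha, ← hb, ← hc, ← hp, ← hq, ← hr, hX2, hY2, h1, h2, h3]⟩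

local notation "𝔤" => LieAlgebra.SpecialLinear.sl (Fin 2) ℝ

private lemma finrank_sl2 : Module.finrank ℝ (sl (Fin 2) ℝ) = 3 := by
  have hsurj : LinearMap.range (Matrix.traceLinearMap (Fin 2) ℝ ℝ) = ⊤ := by
    rw [LinearMap.range_eq_top]
    intro x
    exact ⟨Matrix.single 0 0 x, by simp⟩
  have hrn := LinearMap.finrank_range_add_finrank_ker (Matrix.traceLinearMap (Fin 2) ℝ ℝ)
  rw [hsurj] at hrn
  simp [Module.finrank_matrix] at hrn
  have : Module.finrank ℝ (sl (Fin 2) ℝ) =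
      Module.finrank ℝ (LinearMap.ker (Matrix.traceLinearMap (Fin 2) ℝ ℝ)) := rfl
  omega

open LieAlgebra.SpecialLinear in
/-- Let `V` be a finite-dimensional real Lie module over `sl(2,ℝ)` and `v ∈ V`.  If some
two-dimensional Lie subalgebra `k` of `sl(2,ℝ)` annihilates `v`, then all of `sl(2,ℝ)`
annihilates `v`. -/
theorem stmt2 (V : Type*) [AddCommGroup V] [Module ℝ V] [FiniteDimensional ℝ V]
    [LieRingModule (sl (Fin 2) ℝ) V] [LieModule ℝ (sl (Fin 2) ℝ) V] (v : V)
    (k : LieSubalgebra ℝ (sl (Fin 2) ℝ)) (hk : Module.finrank ℝ k = 2)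
    (hann : ∀ x ∈ k, ⁅x, v⁆ = 0) :
    ∀ x : sl (Fin 2) ℝ, ⁅x, v⁆ = 0 := by
  classical
  let B := Module.finBasisOfFinrankEq ℝ k hk
  set x : k := B 0 with hxdef
  set y : k := B 1 with hydef
  set c : k := ⁅x, y⁆ with hcdef
  -- the bracket c is nonzero (k is not abelian)
  have hc0 : c ≠ 0 := by
    intro h0
    have hXY : ((x : 𝔤) : Matrix (Fin 2) (Fin 2) ℝ) * ((y : 𝔤) : Matrix (Fin 2) (Fin 2) ℝ)
        = ((y : 𝔤) : Matrix (Fin 2) (Fin 2) ℝ) * ((x : 𝔤) : Matrix (Fin 2) (Fin 2) ℝ) := by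
      have h1 : ((c : 𝔤) : Matrix (Fin 2) (Fin 2) ℝ) = 0 := by rw [h0]; rfl
      have h2 : ((c : 𝔤) : Matrix (Fin 2) (Fin 2) ℝ)
          = ((x : 𝔤) : Matrix (Fin 2) (Fin 2) ℝ) * ((y : 𝔤) : Matrix (Fin 2) (Fin 2) ℝ)
            - ((y : 𝔤) : Matrix (Fin 2) (Fin 2) ℝ) * ((x : 𝔤) : Matrix (Fin 2) (Fin 2) ℝ) :=
        sl_bracket (Fin 2) ℝ (x : 𝔤) (y : 𝔤)
      rw [h1] at h2
      linear_combination (norm := abel) -h2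
    have hXne : ((x : 𝔤) : Matrix (Fin 2) (Fin 2) ℝ) ≠ 0 := by
      intro h1
      exact B.ne_zero 0 (by rw [← hxdef]; exact Subtype.ext (Subtype.ext h1))
    obtain ⟨s, hs⟩ := commute_dep _ _ (x : 𝔤).2 (y : 𝔤).2 hXne hXY
    have hy : y = s • x := Subtype.ext (Subtype.ext hs)
    have hli := B.linearIndependent
    rw [Fintype.linearIndependent_iff] at hli
    have := hli ![s, -1] (by
      rw [Fin.sum_univ_two]
      simp only [Matrix.cons_val_zero, Matrix.cons_val_one, Matrix.head_cons]
      rw [← hxdef, ← hydef, hy]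
      module) 1
    simp at this
  -- write c in the basis
  have hrepr : (B.repr c 0) • x + (B.repr c 1) • y = c := by
    have := B.sum_repr c
    rwa [Fin.sum_univ_two, ← hxdef, ← hydef] at this
  set α : ℝ := B.repr c 0 with hα
  set β : ℝ := B.repr c 1 with hβ
  -- brackets with c
  have hxc : ⁅x, c⁆ = β • c := by
    calc ⁅x, c⁆ = ⁅x, α • x + β • y⁆ := by rw [hrepr]
      _ = α • ⁅x, x⁆ + β • ⁅x, y⁆ := by rw [lie_add, lie_smul, lie_smul]
      _ = β • c := by rw [lie_self, smul_zero, zero_add, ← hcdef]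
  have hyx : ⁅y, x⁆ = -c := by rw [hcdef]; exact neg_eq_iff_eq_neg.mp (lie_skew x y)
  have hyc : ⁅y, c⁆ = -(α • c) := by
    calc ⁅y, c⁆ = ⁅y, α • x + β • y⁆ := by rw [hrepr]
      _ = α • ⁅y, x⁆ + β • ⁅y, y⁆ := by rw [lie_add, lie_smul, lie_smul]
      _ = -(α • c) := by rw [lie_self, smul_zero, add_zero, hyx, smul_neg]
  -- an element z with ⁅z, c⁆ = c
  obtain ⟨z, hz⟩ : ∃ z : k, ⁅z, c⁆ = c := by
    by_cases hβ0 : β ≠ 0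
    · exact ⟨β⁻¹ • x, by rw [smul_lie, hxc, smul_smul, inv_mul_cancel₀ hβ0, one_smul]⟩
    by_cases hα0 : α ≠ 0
    · refine ⟨-(α⁻¹ • y), ?_⟩
      rw [neg_lie, smul_lie, hyc, smul_neg, neg_neg, smul_smul, inv_mul_cancel₀ hα0, one_smul]
    · push_neg at hβ0 hα0
      exact absurd (by rw [← hrepr, hα0, hβ0, zero_smul, zero_smul, add_zero]) hc0
  set hK : k := (2 : ℝ) • z with hKdef
  have hKc : ⁅hK, c⁆ = (2 : ℝ) • c := by rw [hKdef, smul_lie, hz]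
  -- pass to matrices
  set hm : Matrix (Fin 2) (Fin 2) ℝ := ((hK : 𝔤) : Matrix (Fin 2) (Fin 2) ℝ) with hmdef
  set em : Matrix (Fin 2) (Fin 2) ℝ := ((c : 𝔤) : Matrix (Fin 2) (Fin 2) ℝ) with emdef
  have hemne : em ≠ 0 := by
    intro h1
    exact hc0 (Subtype.ext (Subtype.ext h1))
  have hrelm : hm * em - em * hm = (2 : ℝ) • em := by
    have h4 := congrArg (fun u : k => ((u : 𝔤) : Matrix (Fin 2) (Fin 2) ℝ)) hKc
    simp only [LieSubalgebra.coe_bracket, Ring.lie_def, SetLike.val_smul] at h4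
    exact h4
  obtain ⟨fm, hft, hf1, hf2⟩ := exists_f hm em (c : 𝔤).2 (hK : 𝔤).2 hemne hrelm
  set e_sl : sl (Fin 2) ℝ := (c : 𝔤) with hesl
  set h_sl : sl (Fin 2) ℝ := (hK : 𝔤) with hhsl
  set f_sl : sl (Fin 2) ℝ := ⟨fm, hft⟩ with hfsl
  have he_ne : e_sl ≠ 0 := fun h0 => hemne (congrArg Subtype.val h0)
  have bra : ∀ A B : sl (Fin 2) ℝ,
      (↑⁅A, B⁆ : Matrix (Fin 2) (Fin 2) ℝ) =
        (A : Matrix (Fin 2) (Fin 2) ℝ) * (B : Matrix (Fin 2) (Fin 2) ℝ) -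
        (B : Matrix (Fin 2) (Fin 2) ℝ) * (A : Matrix (Fin 2) (Fin 2) ℝ) :=
    fun A B => sl_bracket (Fin 2) ℝ A B
  have triple : IsSl2Triple h_sl e_sl f_sl := by
    constructor
    · intro h0
      have hm0 : hm = 0 := congrArg Subtype.val h0
      rw [hm0, zero_mul, mul_zero, sub_zero] at hrelm
      exact hemne (by
        have := hrelm.symm
        rwa [smul_eq_zero_iff_right (by norm_num : (2:ℝ) ≠ 0)] at this)
    · exact Subtype.ext (by rw [bra]; exact hf1)
    · refine Subtype.ext ?_
      rw [bra]
      show hm * em - em * hm = ((2 • e_sl : 𝔤) : Matrix (Fin 2) (Fin 2) ℝ)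
      rw [hrelm]
      show (2:ℝ) • em = ((2 • e_sl : 𝔤) : Matrix (Fin 2) (Fin 2) ℝ)
      simp [two_smul]
      rfl
    · refine Subtype.ext ?_
      rw [bra]
      show hm * fm - fm * hm = ((-(2 • f_sl) : 𝔤) : Matrix (Fin 2) (Fin 2) ℝ)
      rw [hf2]
      show (-2:ℝ) • fm = ((-(2 • f_sl) : 𝔤) : Matrix (Fin 2) (Fin 2) ℝ)
      simp [two_smul]
      rfl
  have Hv : ⁅h_sl, v⁆ = 0 := hann _ hK.2
  have Ev : ⁅e_sl, v⁆ = 0 := hann _ c.2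
  have Fv : ⁅f_sl, v⁆ = 0 := by
    by_contra hw
    have P : triple.HasPrimitiveVectorWith ⁅f_sl, v⁆ (-2 : ℝ) := by
      constructor
      · exact hw
      · rw [leibniz_lie, Hv, lie_zero, add_zero, triple.lie_h_f_nsmul]
        rw [neg_lie, two_smul, add_lie]
        module
      · rw [leibniz_lie, triple.lie_e_f, Hv, Ev, lie_zero, add_zero]
    obtain ⟨n, hn⟩ := P.exists_nat
    have : (0:ℝ) ≤ n := n.cast_nonneg
    linarith
  -- linear independence of the triple
  have hind : LinearIndependent ℝ ![h_sl, e_sl, f_sl] := by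
    rw [Fintype.linearIndependent_iff]
    intro g hg
    rw [Fin.sum_univ_three] at hg
    simp only [Matrix.cons_val_zero, Matrix.cons_val_one, Matrix.head_cons,
      Matrix.cons_val_two, Matrix.tail_cons] at hg
    have leh : ⁅e_sl, h_sl⁆ = -((2:ℝ) • e_sl) := by
      rw [← lie_skew, triple.lie_h_e_smul ℝ]
    have l1 : (-(2 * g 0)) • e_sl + g 2 • h_sl = 0 := by
      have := congrArg (fun u => ⁅e_sl, u⁆) hg
      simp only [lie_add, lie_smul, lie_self, smul_zero, add_zero, lie_zero] at this
      rw [leh, triple.lie_e_f] at this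
      rw [← this]
      module
    have l2 : g 2 = 0 := by
      have := congrArg (fun u => ⁅e_sl, u⁆) l1
      simp only [lie_add, lie_smul, lie_self, smul_zero, zero_add, lie_zero] at this
      rw [leh] at this
      have h2 : (2 * g 2) • e_sl = 0 := by
        rw [← neg_eq_zero, ← this]; module
      rcases smul_eq_zero.mp h2 with h3 | h3
      · linarith
      · exact absurd h3 he_ne
    have l0 : g 0 = 0 := by
      rw [l2, zero_smul, add_zero] at l1
      rcases smul_eq_zero.mp l1 with h3 | h3
      · have : (2:ℝ) * g 0 = 0 := by linarith [neg_eq_zero.mp h3]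
        linarith
      · exact absurd h3 he_ne
    have l1' : g 1 = 0 := by
      rw [l0, l2, zero_smul, zero_smul, zero_add, add_zero] at hg
      rcases smul_eq_zero.mp hg with h3 | h3
      · exact h3
      · exact absurd h3 he_ne
    intro i
    fin_cases i <;> assumption
  -- the triple spans sl(2,ℝ)
  have hsp : Submodule.span ℝ (Set.range ![h_sl, e_sl, f_sl]) = ⊤ := by
    apply Submodule.eq_top_of_finrank_eq
    rw [finrank_span_eq_card hind]
    rw [finrank_sl2]
    simp
  intro X
  have hX : X ∈ Submodule.span ℝ (Set.range ![h_sl, e_sl, f_sl]) := by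
    rw [hsp]; exact Submodule.mem_top
  rw [Submodule.mem_span_range_iff_exists_fun] at hX
  obtain ⟨g, hgX⟩ := hX
  rw [← hgX, Fin.sum_univ_three]
  simp only [Matrix.cons_val_zero, Matrix.cons_val_one, Matrix.head_cons,
    Matrix.cons_val_two, Matrix.tail_cons]
  rw [add_lie, add_lie, smul_lie, smul_lie, smul_lie, Hv, Ev, Fv]
  simp
end
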